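/- Let {N_s}_{s∈S} be a finite AVQC that is symmetrizable: for every finite set {ρ_1,…,ρ_M} ⊆ S(H^{⊗l}) there is a map p : {ρ_1,…,ρ_M} → P(S^l) with ∑_{s^l} p(ρ_i)(s^l) N_{s^l}(ρ_j) = ∑_{s^l} p(ρ_j)(s^l) N_{s^l}(ρ_i) for all i,j. Then every (l, M)-deterministic code (ρ_i, D_i)_{i=1}^M with M ≥ 2 has worst-case average error probability at least 1/4: there exists s^l ∈ S^l with (1/M) ∑_{i=1}^M (1 − tr(N_{s^l}(ρ_i) D_i)) ≥ 1/4. -/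

import Mathlib

open scoped ComplexOrder

/-- Kraus characterization of quantum channels (CPTP maps). -/
def IsCPTP {ι κ : Type*} [Fintype ι] [DecidableEq ι] [Fintype κ] [DecidableEq κ]
    (N : Matrix ι ι ℂ →ₗ[ℂ] Matrix κ κ ℂ) : Prop :=
  ∃ (m : ℕ) (G : Fin m → Matrix κ ι ℂ),
    (∀ a, N a = ∑ j, G j * a * (G j).conjTranspose) ∧
      (∑ j, (G j).conjTranspose * G j = 1)

/-- The elementary tensor `a₁ ⊗ ⋯ ⊗ a_l` of matrices. -/
def elemTensor {ι : Type*} {l : ℕ} (a : Fin l → Matrix ι ι ℂ) :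
    Matrix (Fin l → ι) (Fin l → ι) ℂ :=
  Matrix.of fun x y => ∏ i, a i (x i) (y i)

/-! Write `e i s = 1 - tr(N_s(ρᵢ) Dᵢ)` for the error of message `i` under the state sequence `s`
and `pₖ = p(ρₖ)`. The expectation of `e i` under `pₖ` is the error of `i` on the averaged output
`σ = ∑ₛ pₖ(s) N_s(ρᵢ)`, and by symmetrizability the expectation of `e k` under `pᵢ` is the error of
`k` on the same state `σ`. As `Dᵢ + Dₖ ≤ 1`, these two expected errors sum to at least `1`.
Summing over ordered pairs gives `∑ₖ E_{pₖ}[∑ᵢ e i] ≥ M (M - 1) / 2`, so a maximiser `s` of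
`∑ᵢ e i s` has `∑ᵢ e i s ≥ (M - 1) / 2 ≥ M / 4`.

That each `N_s` maps states to states follows from its Kraus form: the tensor products of Kraus
operators of the factors are Kraus operators of the tensor product channel. -/

open Matrix Finset

section ElemTensor

variable {l : ℕ} {R : Type*} [CommSemiring R]

def elemTensorRect {α β : Type*} (b : Fin l → Matrix α β R) :
    Matrix (Fin l → α) (Fin l → β) R :=
  Matrix.of fun x y => ∏ i, b i (x i) (y i)

lemma elemTensor_eq_elemTensorRect {ι : Type*} (a : Fin l → Matrix ι ι ℂ) :
    elemTensor a = elemTensorRect a := rfl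

lemma elemTensorRect_mul {α β γ : Type*} [Fintype β]
    (b : Fin l → Matrix α β R) (c : Fin l → Matrix β γ R) :
    elemTensorRect b * elemTensorRect c = elemTensorRect fun i => b i * c i := by
  ext x y
  simp only [elemTensorRect, mul_apply, of_apply]
  rw [prod_univ_sum (fun _ => univ) fun i t => b i (x i) t * c i t (y i),
    Fintype.piFinset_univ]
  simp [prod_mul_distrib]

lemma conjTranspose_elemTensorRect [StarRing R] {α β : Type*} (b : Fin l → Matrix α β R) :
    (elemTensorRect b)ᴴ = elemTensorRect fun i => (b i)ᴴ := by
  ext x y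
  simp [elemTensorRect, conjTranspose_apply, star_prod]

lemma sum_elemTensorRect {α β : Type*} {J : Fin l → Type*} [∀ i, Fintype (J i)]
    (f : ∀ i, J i → Matrix α β R) :
    ∑ j : ∀ i, J i, elemTensorRect (fun i => f i (j i)) =
      elemTensorRect fun i => ∑ t, f i t := by
  ext x y
  simp only [Matrix.sum_apply, elemTensorRect, of_apply]
  rw [prod_univ_sum (fun _ => univ) fun i t => f i t (x i) (y i), Fintype.piFinset_univ]

lemma elemTensorRect_one {α : Type*} [DecidableEq α] :
    elemTensorRect (fun _ : Fin l => (1 : Matrix α α R)) = 1 := by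
  ext x y
  simp [elemTensorRect, one_apply, prod_boole, funext_iff]

lemma single_eq_elemTensor {ι : Type*} [DecidableEq ι] (x y : Fin l → ι) :
    single x y (1 : ℂ) = elemTensor fun i => single (x i) (y i) 1 := by
  ext u v
  simp [single, elemTensor, prod_boole, funext_iff, forall_and]

lemma linearMap_ext_elemTensor {ι V : Type*} [Fintype ι] [DecidableEq ι] [AddCommMonoid V]
    [Module ℂ V] {f g : Matrix (Fin l → ι) (Fin l → ι) ℂ →ₗ[ℂ] V}
    (h : ∀ a, f (elemTensor a) = g (elemTensor a)) : f = g := by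
  refine Matrix.ext_linearMap (R := ℂ) fun x y => LinearMap.ext_ring ?_
  simpa [single_eq_elemTensor] using h fun i => single (x i) (y i) 1

end ElemTensor

section Kraus

variable {ι κ : Type*} {l : ℕ}

def tensorKraus {J : Fin l → Type*} (G : ∀ i, J i → Matrix κ ι ℂ) (j : ∀ i, J i) :
    Matrix (Fin l → κ) (Fin l → ι) ℂ :=
  elemTensorRect fun i => G i (j i)

lemma sum_conjTranspose_tensorKraus_mul [Fintype κ] [DecidableEq ι] {J : Fin l → Type*}
    [∀ i, Fintype (J i)] {G : ∀ i, J i → Matrix κ ι ℂ} (hG : ∀ i, ∑ t, (G i t)ᴴ * G i t = 1) :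
    ∑ j, (tensorKraus G j)ᴴ * tensorKraus G j = 1 := by
  simp_rw [tensorKraus, conjTranspose_elemTensorRect, elemTensorRect_mul]
  rw [sum_elemTensorRect fun i t => (G i t)ᴴ * G i t]
  simp_rw [hG, elemTensorRect_one]

variable [Fintype ι]

def krausMap {J : Type*} [Fintype J] (G : J → Matrix κ ι ℂ) :
    Matrix ι ι ℂ →ₗ[ℂ] Matrix κ κ ℂ where
  toFun a := ∑ j, G j * a * (G j)ᴴ
  map_add' a b := by simp [Matrix.mul_add, Matrix.add_mul, sum_add_distrib]
  map_smul' c a := by simp [smul_sum]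

lemma krausMap_apply {J : Type*} [Fintype J] (G : J → Matrix κ ι ℂ) (a : Matrix ι ι ℂ) :
    krausMap G a = ∑ j, G j * a * (G j)ᴴ := rfl

lemma krausMap_tensorKraus_elemTensor {J : Fin l → Type*} [∀ i, Fintype (J i)]
    (G : ∀ i, J i → Matrix κ ι ℂ) (a : Fin l → Matrix ι ι ℂ) :
    krausMap (tensorKraus G) (elemTensor a) = elemTensor fun i => krausMap (G i) (a i) := by
  simp_rw [krausMap_apply, tensorKraus, elemTensor_eq_elemTensorRect, conjTranspose_elemTensorRect,
    elemTensorRect_mul]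
  exact sum_elemTensorRect fun i t => G i t * a i * (G i t)ᴴ

variable [DecidableEq ι] [Fintype κ] [DecidableEq κ]

lemma isCPTP_krausMap {J : Type*} [Fintype J] (G : J → Matrix κ ι ℂ)
    (hG : ∑ j, (G j)ᴴ * G j = 1) : IsCPTP (krausMap G) := by
  let e := Fintype.equivFin J
  refine ⟨Fintype.card J, G ∘ e.symm, fun a => ?_, ?_⟩
  · exact (e.symm.sum_comp fun j => G j * a * (G j)ᴴ).symm
  · exact (e.symm.sum_comp fun j => (G j)ᴴ * G j).trans hG

lemma IsCPTP.exists_eq_krausMap {N : Matrix ι ι ℂ →ₗ[ℂ] Matrix κ κ ℂ} (hN : IsCPTP N) :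
    ∃ (m : ℕ) (G : Fin m → Matrix κ ι ℂ), N = krausMap G ∧ ∑ j, (G j)ᴴ * G j = 1 := by
  obtain ⟨m, G, hNG, hG⟩ := hN
  exact ⟨m, G, LinearMap.ext hNG, hG⟩

lemma IsCPTP.posSemidef_map {N : Matrix ι ι ℂ →ₗ[ℂ] Matrix κ κ ℂ} (hN : IsCPTP N)
    {a : Matrix ι ι ℂ} (ha : a.PosSemidef) : (N a).PosSemidef := by
  obtain ⟨m, G, rfl, -⟩ := hN.exists_eq_krausMap
  exact posSemidef_sum _ fun j _ => ha.mul_mul_conjTranspose_same (G j)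

lemma IsCPTP.trace_map {N : Matrix ι ι ℂ →ₗ[ℂ] Matrix κ κ ℂ} (hN : IsCPTP N)
    (a : Matrix ι ι ℂ) : (N a).trace = a.trace := by
  obtain ⟨m, G, rfl, hG⟩ := hN.exists_eq_krausMap
  simp_rw [krausMap_apply, trace_sum, trace_mul_cycle (G _) a, ← trace_sum, ← sum_mul, hG,
    Matrix.one_mul]

lemma IsCPTP.of_map_elemTensor {N : Fin l → Matrix ι ι ℂ →ₗ[ℂ] Matrix κ κ ℂ}
    (hN : ∀ i, IsCPTP (N i))
    {T : Matrix (Fin l → ι) (Fin l → ι) ℂ →ₗ[ℂ] Matrix (Fin l → κ) (Fin l → κ) ℂ}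
    (hT : ∀ a, T (elemTensor a) = elemTensor fun i => N i (a i)) : IsCPTP T := by
  choose m G hNG hG using fun i => (hN i).exists_eq_krausMap
  have hTG : T = krausMap (tensorKraus G) := linearMap_ext_elemTensor fun a => by
    simp only [hT, krausMap_tensorKraus_elemTensor, hNG]
  exact hTG ▸ isCPTP_krausMap _ (sum_conjTranspose_tensorKraus_mul hG)

end Kraus

section States

variable {n : Type*} [Fintype n]

def IsDensityMatrix (ρ : Matrix n n ℂ) : Prop :=
  ρ.PosSemidef ∧ ρ.trace = 1

lemma IsCPTP.isDensityMatrix_map {ι κ : Type*} [Fintype ι] [DecidableEq ι] [Fintype κ]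
    [DecidableEq κ] {N : Matrix ι ι ℂ →ₗ[ℂ] Matrix κ κ ℂ} (hN : IsCPTP N) {ρ : Matrix ι ι ℂ}
    (hρ : IsDensityMatrix ρ) : IsDensityMatrix (N ρ) :=
  ⟨hN.posSemidef_map hρ.1, (hN.trace_map ρ).trans hρ.2⟩

lemma IsDensityMatrix.sum_smul {X : Type*} [Fintype X] {p : X → ℝ} (hp : p ∈ stdSimplex ℝ X)
    {σ : X → Matrix n n ℂ} (hσ : ∀ x, IsDensityMatrix (σ x)) :
    IsDensityMatrix (∑ x, (p x : ℂ) • σ x) := by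
  refine ⟨posSemidef_sum _ fun x _ => (hσ x).1.smul (Complex.zero_le_real.2 (hp.1 x)), ?_⟩
  simp_rw [trace_sum, trace_smul, (hσ _).2, smul_eq_mul, mul_one]
  exact_mod_cast hp.2

lemma re_trace_sum_smul_mul {X : Type*} [Fintype X] (p : X → ℝ) (σ : X → Matrix n n ℂ)
    (D : Matrix n n ℂ) :
    ((∑ x, (p x : ℂ) • σ x) * D).trace.re = ∑ x, p x * (σ x * D).trace.re := by
  simp [sum_mul, trace_sum, Complex.re_sum]

lemma Matrix.PosSemidef.trace_mul_nonneg [DecidableEq n] {A B : Matrix n n ℂ} (hA : A.PosSemidef)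
    (hB : B.PosSemidef) : 0 ≤ (A * B).trace := by
  open scoped MatrixOrder in
  obtain ⟨C, rfl⟩ := CStarAlgebra.nonneg_iff_eq_star_mul_self.mp hA.nonneg
  rw [trace_mul_cycle, trace_mul_cycle]
  exact (hB.mul_mul_conjTranspose_same C).trace_nonneg

lemma sum_re_trace_mul_le_one {m : Type*} [Fintype m] [DecidableEq n] {σ : Matrix n n ℂ}
    (hσ : IsDensityMatrix σ) {D : m → Matrix n n ℂ} (hD : ∀ j, (D j).PosSemidef)
    (hDsum : ∑ j, D j = 1) (s : Finset m) : ∑ j ∈ s, (σ * D j).trace.re ≤ 1 := by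
  have hnonneg j : 0 ≤ (σ * D j).trace.re := (Complex.le_def.mp (hσ.1.trace_mul_nonneg (hD j))).1
  calc ∑ j ∈ s, (σ * D j).trace.re ≤ ∑ j, (σ * D j).trace.re :=
        sum_le_sum_of_subset_of_nonneg (subset_univ s) fun j _ _ => hnonneg j
    _ = 1 := by
        rw [← Complex.re_sum, ← trace_sum, ← mul_sum, hDsum, Matrix.mul_one, hσ.2, Complex.one_re]

end States

section Averaging

variable {m : Type*} [Fintype m]

lemma card_mul_card_sub_one_le_two_mul_sum (A : m → m → ℝ) (hdiag : ∀ i, 0 ≤ A i i)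
    (hpair : ∀ i k, i ≠ k → 1 ≤ A i k + A k i) :
    (Fintype.card m : ℝ) * (Fintype.card m - 1) ≤ 2 * ∑ i, ∑ k, A i k := by
  classical
  have hentry i k : 1 - (if i = k then 1 else 0) ≤ A i k + A k i := by
    split_ifs with h
    · subst h; linarith [hdiag i]
    · simpa using hpair i k h
  calc (Fintype.card m : ℝ) * (Fintype.card m - 1)
      = ∑ i : m, ∑ k : m, (1 - if i = k then (1 : ℝ) else 0) := by
        simp [sum_sub_distrib, mul_sub]
    _ ≤ ∑ i, ∑ k, (A i k + A k i) := sum_le_sum fun i _ => sum_le_sum fun k _ => hentry i k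
    _ = 2 * ∑ i, ∑ k, A i k := by
        rw [sum_congr rfl fun i _ => sum_add_distrib, sum_add_distrib,
          sum_comm (f := fun i k => A k i), two_mul]

lemma exists_card_sub_one_div_two_le_sum [Nonempty m] {T : Type*} [Fintype T]
    {p e : m → T → ℝ} (hp : ∀ k, p k ∈ stdSimplex ℝ T) (he : ∀ i t, 0 ≤ e i t)
    (hpair : ∀ i k, i ≠ k → 1 ≤ ∑ t, p k t * e i t + ∑ t, p i t * e k t) :
    ∃ t, ((Fintype.card m : ℝ) - 1) / 2 ≤ ∑ i, e i t := by
  obtain ⟨k₀⟩ := ‹Nonempty m›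
  have : Nonempty T := by
    by_contra hT
    have := (hp k₀).2
    simp [not_nonempty_iff.mp hT] at this
  obtain ⟨t, -, ht⟩ := exists_max_image univ (fun t => ∑ i, e i t) univ_nonempty
  refine ⟨t, ?_⟩
  have hpairs := card_mul_card_sub_one_le_two_mul_sum (fun i k => ∑ t, p k t * e i t)
    (fun i => sum_nonneg fun t _ => mul_nonneg ((hp i).1 t) (he i t)) hpair
  have hexp k : ∑ i, ∑ t, p k t * e i t ≤ ∑ i, e i t := calc
    ∑ i, ∑ t, p k t * e i t = ∑ t', p k t' * ∑ i, e i t' := by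
      rw [sum_comm]; simp_rw [mul_sum]
    _ ≤ ∑ t', p k t' * ∑ i, e i t :=
      sum_le_sum fun t' _ => mul_le_mul_of_nonneg_left (ht t' (mem_univ t')) ((hp k).1 t')
    _ = ∑ i, e i t := by rw [← sum_mul, (hp k).2, one_mul]
  have hsum : ∑ i, ∑ k, ∑ t, p k t * e i t ≤ Fintype.card m * ∑ i, e i t := by
    rw [sum_comm]
    simpa using sum_le_sum fun k (_ : k ∈ univ) => hexp k
  have hcard : (0 : ℝ) < Fintype.card m := by exact_mod_cast Fintype.card_pos
  rw [div_le_iff₀ two_pos]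
  nlinarith

end Averaging

theorem stmt_19_general {ι κ S : Type*} [Fintype ι] [DecidableEq ι]
    [Fintype κ] [DecidableEq κ] [Fintype S]
    (Ns : S → (Matrix ι ι ℂ →ₗ[ℂ] Matrix κ κ ℂ)) (hNs : ∀ s, IsCPTP (Ns s))
    (l : ℕ)
    (NT : (Fin l → S) → (Matrix (Fin l → ι) (Fin l → ι) ℂ →ₗ[ℂ]
      Matrix (Fin l → κ) (Fin l → κ) ℂ))
    (hNT : ∀ (sl : Fin l → S) (a : Fin l → Matrix ι ι ℂ),
      NT sl (elemTensor a) = elemTensor fun i => Ns (sl i) (a i))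
    (M : ℕ) (hM : 2 ≤ M)
    (ρ : Fin M → Matrix (Fin l → ι) (Fin l → ι) ℂ)
    (hρ : ∀ i, (ρ i).PosSemidef ∧ (ρ i).trace = 1)
    (hsym : ∃ p : Fin M → ((Fin l → S) → ℝ),
      (∀ i, (∀ sl, 0 ≤ p i sl) ∧ ∑ sl, p i sl = 1) ∧
      ∀ i j, ∑ sl, ((p i sl : ℝ) : ℂ) • NT sl (ρ j) =
        ∑ sl, ((p j sl : ℝ) : ℂ) • NT sl (ρ i))
    (D : Fin M → Matrix (Fin l → κ) (Fin l → κ) ℂ)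
    (hD : ∀ i, (D i).PosSemidef) (hDsum : ∑ i, D i = 1) :
    ∃ sl : Fin l → S,
      (1 / (M : ℝ)) * ∑ i, (1 - ((NT sl (ρ i)) * D i).trace.re) ≥ 1 / 4 := by
  obtain ⟨p, hp, hpsym⟩ := hsym
  have hNT_cptp sl : IsCPTP (NT sl) := .of_map_elemTensor (fun i => hNs (sl i)) (hNT sl)
  have hσ k i : IsDensityMatrix (∑ sl, (p k sl : ℂ) • NT sl (ρ i)) :=
    .sum_smul (hp k) fun sl => (hNT_cptp sl).isDensityMatrix_map (hρ i)
  have hmeasure {σ} (hσ : IsDensityMatrix σ) (s : Finset (Fin M)) :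
      ∑ j ∈ s, (σ * D j).trace.re ≤ 1 :=
    sum_re_trace_mul_le_one hσ hD hDsum s
  have hexp i k : ∑ sl, p k sl * (1 - (NT sl (ρ i) * D i).trace.re) =
      1 - ((∑ sl, (p k sl : ℂ) • NT sl (ρ i)) * D i).trace.re := by
    simp_rw [re_trace_sum_smul_mul, mul_sub, mul_one, sum_sub_distrib, (hp k).2]
  have : Nonempty (Fin M) := ⟨⟨0, by omega⟩⟩
  obtain ⟨sl, hsl⟩ := exists_card_sub_one_div_two_le_sum hp
    (e := fun i sl => 1 - (NT sl (ρ i) * D i).trace.re)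
    (fun i sl => by simpa using hmeasure ((hNT_cptp sl).isDensityMatrix_map (hρ i)) {i})
    fun i k hik => by
      have := hmeasure (hσ k i) {i, k}
      rw [sum_pair hik] at this
      rw [hexp, hexp, hpsym i k]
      linarith
  refine ⟨sl, ?_⟩
  rw [Fintype.card_fin] at hsl
  have hM' : (2 : ℝ) ≤ M := by exact_mod_cast hM
  rw [ge_iff_le, one_div_mul_eq_div, le_div_iff₀ (by positivity)]
  linarith

/-- for a symmetrizable AVQC `{N_s}` (symmetrizability witnessed at
block length `l` for the code states), every `(l,M)`-deterministic code with `M ≥ 2`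
has worst-case average error probability at least `1/4`: there is an `s^l` with
`(1/M) ∑ᵢ (1 − tr(N_{s^l}(ρᵢ) Dᵢ)) ≥ 1/4`. -/
theorem stmt_19 {ι κ S : Type*} [Fintype ι] [DecidableEq ι]
    [Fintype κ] [DecidableEq κ] [Fintype S]
    (Ns : S → (Matrix ι ι ℂ →ₗ[ℂ] Matrix κ κ ℂ)) (hNs : ∀ s, IsCPTP (Ns s))
    (l : ℕ) (hl : 0 < l)
    (NT : (Fin l → S) → (Matrix (Fin l → ι) (Fin l → ι) ℂ →ₗ[ℂ]
      Matrix (Fin l → κ) (Fin l → κ) ℂ))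
    (hNT : ∀ (sl : Fin l → S) (a : Fin l → Matrix ι ι ℂ),
      NT sl (elemTensor a) = elemTensor fun i => Ns (sl i) (a i))
    (M : ℕ) (hM : 2 ≤ M)
    (ρ : Fin M → Matrix (Fin l → ι) (Fin l → ι) ℂ)
    (hρ : ∀ i, (ρ i).PosSemidef ∧ (ρ i).trace = 1)
    (hsym : ∃ p : Fin M → ((Fin l → S) → ℝ),
      (∀ i, (∀ sl, 0 ≤ p i sl) ∧ ∑ sl, p i sl = 1) ∧
      ∀ i j, ∑ sl, ((p i sl : ℝ) : ℂ) • NT sl (ρ j) =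
        ∑ sl, ((p j sl : ℝ) : ℂ) • NT sl (ρ i))
    (D : Fin M → Matrix (Fin l → κ) (Fin l → κ) ℂ)
    (hD : ∀ i, (D i).PosSemidef) (hDsum : ∑ i, D i = 1) :
    ∃ sl : Fin l → S,
      (1 / (M : ℝ)) * ∑ i, (1 - ((NT sl (ρ i)) * D i).trace.re) ≥ 1 / 4 :=
  stmt_19_general Ns hNs l NT hNT M hM ρ hρ hsym D hD hDsum
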